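/- arXiv:1402.2999 — 4 statements merged into one kernel-verified Lean document; each statement's English description precedes it below -/
import Mathlib

section
/- Let Y be a compact metric space and φ : Y × ℝⁿ → ℝ be such that (1) for every y ∈ Y the function x ↦ φ(y,x) is convex, and (2) for every x ∈ ℝⁿ the function y ↦ φ(y,x) is upper semicontinuous. Define Φ(x) = sup_{y ∈ Y} φ(y,x) and assume Φ is finite in a neighborhood of a point x (so that its subdifferential at x is nonempty and compact). Then the subdifferential of Φ at x equals the closed convex hull of the union over y ∈ Y(x) of the subdifferentials of φ(y,·) at x, where Y(x) = { y ∈ Y : φ(y,x) = Φ(x) } and the subdifferential of a convex function h at x is the set { v ∈ ℝⁿ : ∀ z, h(z) ≥ h(x) + ⟨v, z − x⟩ }. -/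
/-!
By compactness and upper semicontinuity every supremum `Φ z` is attained. The inclusion `⊇` holds
because, for active `y`, `∂(φ y)(x) ⊆ ∂Φ(x)` and `∂Φ(x)` is closed and convex. For `⊆`, by
separation it suffices that for each `v ∈ ∂Φ(x)` and each direction `d` some active `y` has a
subgradient `w` with `⟪v, d⟫ ≤ ⟪w, d⟫`. Along the ray `x + t • d` the function `Φ` grows at least
at rate `⟪v, d⟫`. A cluster point `y`, as `t → 0⁺`, of maximisers at `x + t • d` is active and
`φ y` grows at the same rate: this follows from upper semicontinuity in `y` and the monotonicity
of the slopes of a convex function. Hahn–Banach, applied to the one-sided directional derivative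
of `φ y` at `x` (a sublinear function), then yields `w`.
-/

open scoped RealInnerProductSpace
open Set Filter Topology

theorem UpperSemicontinuous.le_of_mapClusterPt {α X β : Type*} [TopologicalSpace X]
    [LinearOrder β] [DenselyOrdered β] [TopologicalSpace β] [OrderTopology β]
    {f : X → β} (hf : UpperSemicontinuous f) {l : Filter α} {u : α → X} {x : X}
    (hx : MapClusterPt x l u) {L : α → β} {b : β} (hL : Tendsto L l (𝓝 b))
    (hLf : ∀ᶠ a in l, L a ≤ f (u a)) : b ≤ f x := by
  by_contra! hlt
  obtain ⟨r, hfr, hrb⟩ := exists_between hlt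
  obtain ⟨a, hfa, hLa, hra⟩ := ((hx.frequently (hf x r hfr)).and_eventually
    (hLf.and (hL.eventually (lt_mem_nhds hrb)))).exists
  exact lt_irrefl _ ((hfa.trans hra).trans_le hLa)

theorem UpperSemicontinuous.bddAbove_range {Y : Type*} [TopologicalSpace Y] [CompactSpace Y]
    {f : Y → ℝ} (hf : UpperSemicontinuous f) : BddAbove (range f) := by
  simpa using (hf.upperSemicontinuousOn univ).bddAbove_of_isCompact isCompact_univ

theorem UpperSemicontinuous.exists_eq_ciSup {Y : Type*} [TopologicalSpace Y] [CompactSpace Y]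
    [Nonempty Y] {f : Y → ℝ} (hf : UpperSemicontinuous f) : ∃ y, f y = ⨆ y', f y' := by
  obtain ⟨y, -, hy⟩ :=
    (hf.upperSemicontinuousOn univ).exists_isMaxOn univ_nonempty isCompact_univ
  exact ⟨y, le_antisymm (le_ciSup hf.bddAbove_range y) (ciSup_le fun y' => hy (mem_univ y'))⟩

theorem exists_eq_and_forall_add_mul_le {Y : Type*} [TopologicalSpace Y] [CompactSpace Y]
    {g : Y → ℝ → ℝ} {G : ℝ → ℝ} {c : ℝ} (hconv : ∀ y, ConvexOn ℝ (Ici 0) (g y))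
    (husc : ∀ t, UpperSemicontinuous fun y => g y t) (hle : ∀ y t, g y t ≤ G t)
    (hG : ∀ t > 0, ∃ y, G 0 + t * c ≤ g y t) :
    ∃ y, g y 0 = G 0 ∧ ∀ t > 0, g y 0 + t * c ≤ g y t := by
  have hY : Nonempty Y := let ⟨y, _⟩ := hG 1 one_pos; ⟨y⟩
  choose! ys hys using hG
  obtain ⟨y, hy⟩ := exists_clusterPt_of_compactSpace (map ys (𝓝[>] (0 : ℝ)))
  have slope_le {y : Y} {s t : ℝ} (hs : 0 < s) (hst : s ≤ t) :
      (g y s - g y 0) / s ≤ (g y t - g y 0) / t := by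
    simpa using (hconv y).secant_mono self_mem_Ici (mem_Ici.2 hs.le) (hs.trans_le hst).le hs.ne'
      (hs.trans_le hst).ne' hst
  -- `L t` bounds `g (ys t) 0` from below by convexity on `[0, 1]`, and tends to `G 0`
  set L : ℝ → ℝ := fun t => (G 0 + t * (c - G 1)) / (1 - t)
  have hL : Tendsto L (𝓝[>] 0) (𝓝 (G 0)) := by
    have : ContinuousAt L 0 := by fun_prop (disch := norm_num)
    simpa [L] using this.tendsto.mono_left nhdsWithin_le_nhds
  have hL_le {t : ℝ} (ht : t ∈ Ioo 0 1) : L t ≤ g (ys t) 0 := by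
    have hslope := slope_le (y := ys t) ht.1 ht.2.le
    rw [div_one, div_le_iff₀ ht.1] at hslope
    rw [div_le_iff₀ (sub_pos.2 ht.2)]
    linarith [hys t ht.1, mul_le_mul_of_nonneg_left (hle (ys t) 1) ht.1.le]
  have hslope {t T : ℝ} (ht : 0 < t) (htT : t ≤ T) : g (ys t) 0 + T * c ≤ g (ys t) T := by
    have hc : c ≤ (g (ys t) t - g (ys t) 0) / t := by
      rw [le_div_iff₀ ht]
      linarith [hys t ht, hle (ys t) 0]
    have := hc.trans (slope_le ht htT)
    rw [le_div_iff₀ (ht.trans_le htT)] at this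
    linarith
  have hactive : G 0 ≤ g y 0 := (husc 0).le_of_mapClusterPt hy hL
    (eventually_of_mem (Ioo_mem_nhdsGT one_pos) fun t ht => hL_le ht)
  refine ⟨y, le_antisymm (hle y 0) hactive, fun T hT => ?_⟩
  have : G 0 + T * c ≤ g y T := by
    refine (husc T).le_of_mapClusterPt hy (hL.add_const (T * c)) ?_
    filter_upwards [Ioo_mem_nhdsGT (lt_min one_pos hT)] with t ht
    linarith [hL_le ⟨ht.1, ht.2.trans_le (min_le_left _ _)⟩,
      hslope ht.1 (ht.2.le.trans (min_le_right _ _))]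
  linarith [hle y 0]

section RightLineDeriv

variable {E : Type*} [AddCommGroup E] [Module ℝ E]

noncomputable def rightLineDeriv (f : E → ℝ) (x v : E) : ℝ :=
  derivWithin (fun t : ℝ => f (x + t • v)) (Ioi 0) 0

variable {f : E → ℝ}

theorem ConvexOn.comp_add_smul (hf : ConvexOn ℝ univ f) (x v : E) :
    ConvexOn ℝ univ fun t : ℝ => f (x + t • v) := by
  simpa [Function.comp_def] using
    (hf.translate_right x).comp_linearMap (LinearMap.toSpanSingleton ℝ E v)

theorem ConvexOn.hasDerivWithinAt_rightLineDeriv (hf : ConvexOn ℝ univ f) (x v : E) :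
    HasDerivWithinAt (fun t : ℝ => f (x + t • v)) (rightLineDeriv f x v) (Ioi 0) 0 :=
  (hf.comp_add_smul x v).hasDerivWithinAt_rightDeriv_of_mem_interior (by simp)

theorem ConvexOn.tendsto_rightLineDeriv (hf : ConvexOn ℝ univ f) (x v : E) :
    Tendsto (fun t => (f (x + t • v) - f x) / t) (𝓝[>] 0) (𝓝 (rightLineDeriv f x v)) := by
  refine ((hasDerivWithinAt_iff_tendsto_slope' self_notMem_Ioi).1
    (hf.hasDerivWithinAt_rightLineDeriv x v)).congr fun t => ?_
  simp [slope_def_field]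

theorem ConvexOn.rightLineDeriv_le (hf : ConvexOn ℝ univ f) (x v : E) {t : ℝ} (ht : 0 < t) :
    rightLineDeriv f x v ≤ (f (x + t • v) - f x) / t := by
  simpa [rightLineDeriv, slope_def_field] using
    (hf.comp_add_smul x v).rightDeriv_le_slope_of_mem_interior (by simp) (mem_univ t) ht

theorem ConvexOn.le_rightLineDeriv (hf : ConvexOn ℝ univ f) {x v : E} {c : ℝ}
    (h : ∀ t > 0, f x + t * c ≤ f (x + t • v)) : c ≤ rightLineDeriv f x v := by
  refine ge_of_tendsto (hf.tendsto_rightLineDeriv x v) ?_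
  filter_upwards [self_mem_nhdsWithin] with t (ht : 0 < t)
  rw [le_div_iff₀ ht]
  linarith [h t ht]

theorem ConvexOn.rightLineDeriv_smul (hf : ConvexOn ℝ univ f) (x v : E) {c : ℝ} (hc : 0 < c) :
    rightLineDeriv f x (c • v) = c * rightLineDeriv f x v := by
  have hcomp : HasDerivWithinAt (fun t : ℝ => f (x + t • c • v)) (rightLineDeriv f x v * c)
      (Ioi 0) 0 := by
    simpa only [Function.comp_def, smul_smul] using
      (hf.hasDerivWithinAt_rightLineDeriv x v).comp_of_eq (s := Ioi 0) 0
        (hasDerivAt_mul_const c).hasDerivWithinAt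
        (fun t (ht : t ∈ Ioi 0) => show t * c ∈ Ioi 0 from mul_pos ht hc) (zero_mul c).symm
  rw [rightLineDeriv, hcomp.derivWithin (uniqueDiffWithinAt_Ioi 0), mul_comm]

theorem ConvexOn.rightLineDeriv_add_le (hf : ConvexOn ℝ univ f) (x u v : E) :
    rightLineDeriv f x (u + v) ≤ rightLineDeriv f x u + rightLineDeriv f x v := by
  refine ge_of_tendsto ((hf.tendsto_rightLineDeriv x u).add (hf.tendsto_rightLineDeriv x v)) ?_
  filter_upwards [self_mem_nhdsWithin] with t (ht : 0 < t)
  have hmid : f (x + (t / 2) • (u + v)) ≤ (f (x + t • u) + f (x + t • v)) / 2 := by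
    have := hf.2 (mem_univ (x + t • u)) (mem_univ (x + t • v)) (by norm_num : (0 : ℝ) ≤ 1 / 2)
      (by norm_num : (0 : ℝ) ≤ 1 / 2) (by norm_num)
    have hpt : (1 / 2 : ℝ) • (x + t • u) + (1 / 2 : ℝ) • (x + t • v) = x + (t / 2) • (u + v) := by
      module
    rw [hpt, smul_eq_mul, smul_eq_mul] at this
    linarith
  calc rightLineDeriv f x (u + v) ≤ (f (x + (t / 2) • (u + v)) - f x) / (t / 2) :=
        hf.rightLineDeriv_le x _ (half_pos ht)
    _ ≤ ((f (x + t • u) + f (x + t • v)) / 2 - f x) / (t / 2) := by gcongr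
    _ = (f (x + t • u) - f x) / t + (f (x + t • v) - f x) / t := by field_simp; ring

end RightLineDeriv

theorem exists_linearMap_le_sublinear_apply_eq {E : Type*} [AddCommGroup E] [Module ℝ E]
    {N : E → ℝ} (N_hom : ∀ c : ℝ, 0 < c → ∀ x, N (c • x) = c * N x)
    (N_add : ∀ x y, N (x + y) ≤ N x + N y) (d : E) :
    ∃ g : E →ₗ[ℝ] ℝ, (∀ x, g x ≤ N x) ∧ g d = N d := by
  have N_zero : N 0 = 0 := by
    have := N_hom 2 two_pos 0
    rw [smul_zero] at this
    linarith
  have H : ∀ c : ℝ, c • d = 0 → c • N d = 0 := by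
    intro c h
    rcases smul_eq_zero.1 h with rfl | rfl
    · exact zero_smul ℝ _
    · rw [N_zero, smul_zero]
  set f : E →ₗ.[ℝ] ℝ := LinearPMap.mkSpanSingleton' d (N d) H
  have hfN : ∀ z : f.domain, f z ≤ N z := by
    rintro ⟨z, hz⟩
    obtain ⟨a, rfl⟩ := Submodule.mem_span_singleton.1 hz
    rw [LinearPMap.mkSpanSingleton'_apply]
    change a * N d ≤ N (a • d)
    rcases lt_trichotomy a 0 with ha | rfl | ha
    · have h0 := N_add d (-d)
      rw [add_neg_cancel, N_zero] at h0
      rw [← neg_smul_neg, N_hom (-a) (neg_pos.2 ha)]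
      nlinarith
    · simp [N_zero]
    · rw [N_hom a ha]
  obtain ⟨g, hgf, hgN⟩ := exists_extension_of_le_sublinear f N N_hom N_add hfN
  exact ⟨g, hgN, (hgf ⟨d, Submodule.mem_span_singleton_self d⟩).trans
    (LinearPMap.mkSpanSingleton'_apply_self _ _ _ _)⟩

section Subdifferential

variable {E : Type*} [NormedAddCommGroup E] [InnerProductSpace ℝ E]

def subdifferential (f : E → ℝ) (x : E) : Set E :=
  {v | ∀ z, f z ≥ f x + ⟪v, z - x⟫}

theorem isClosed_subdifferential (f : E → ℝ) (x : E) : IsClosed (subdifferential f x) := by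
  simp only [subdifferential, ge_iff_le, ofPred_forall]
  exact isClosed_iInter fun z => isClosed_le (by fun_prop) continuous_const

theorem convex_subdifferential (f : E → ℝ) (x : E) : Convex ℝ (subdifferential f x) := by
  intro v hv w hw a b ha hb hab z
  have hv := mul_le_mul_of_nonneg_left (hv z) ha
  have hw := mul_le_mul_of_nonneg_left (hw z) hb
  rw [inner_add_left, real_inner_smul_left, real_inner_smul_left]
  linear_combination hv + hw + (f z - f x) * hab

theorem subdifferential_subset_of_le {f g : E → ℝ} {x : E} (hle : ∀ z, g z ≤ f z)
    (hx : g x = f x) : subdifferential g x ⊆ subdifferential f x := fun v hv z => by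
  linarith [hv z, hle z]

theorem ConvexOn.exists_mem_subdifferential_le_inner [FiniteDimensional ℝ E] {f : E → ℝ}
    (hf : ConvexOn ℝ univ f) {x d : E} {c : ℝ} (h : ∀ t > 0, f x + t * c ≤ f (x + t • d)) :
    ∃ w ∈ subdifferential f x, c ≤ ⟪w, d⟫ := by
  obtain ⟨g, hg, hgd⟩ := exists_linearMap_le_sublinear_apply_eq
    (fun c hc v => hf.rightLineDeriv_smul x v hc) (hf.rightLineDeriv_add_le x) d
  set w := (InnerProductSpace.toDual ℝ E).symm (LinearMap.toContinuousLinearMap g)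
  have hw (u : E) : ⟪w, u⟫ = g u := InnerProductSpace.toDual_symm_apply
  refine ⟨w, fun z => ?_, ?_⟩
  · have := (hg (z - x)).trans (hf.rightLineDeriv_le x (z - x) one_pos)
    rw [one_smul, add_sub_cancel, div_one] at this
    linarith [hw (z - x)]
  · rw [hw, hgd]
    exact hf.le_rightLineDeriv h

theorem mem_closure_convexHull_of_forall_inner_le [CompleteSpace E] {s : Set E} {v : E}
    (h : ∀ d, ∃ w ∈ s, ⟪v, d⟫ ≤ ⟪w, d⟫) : v ∈ closure (convexHull ℝ s) := by
  by_contra hv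
  obtain ⟨F, u, hFu, huv⟩ :=
    geometric_hahn_banach_closed_point (convex_convexHull ℝ s).closure isClosed_closure hv
  set d := (InnerProductSpace.toDual ℝ E).symm F
  have hd (a : E) : ⟪a, d⟫ = F a := by
    rw [real_inner_comm]
    exact InnerProductSpace.toDual_symm_apply
  obtain ⟨w, hws, hvw⟩ := h d
  have hwu := hFu w (subset_closure (subset_convexHull ℝ s hws))
  rw [← hd] at hwu huv
  linarith

end Subdifferential

theorem exists_active_le_inner_of_mem_subdifferential {E Y : Type*} [NormedAddCommGroup E]
    [InnerProductSpace ℝ E] [FiniteDimensional ℝ E] [TopologicalSpace Y] [CompactSpace Y]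
    {φ : Y → E → ℝ} {Φ : E → ℝ} (hconv : ∀ y, ConvexOn ℝ univ (φ y))
    (husc : ∀ x, UpperSemicontinuous fun y => φ y x) (hle : ∀ y x, φ y x ≤ Φ x)
    (hattain : ∀ x, ∃ y, φ y x = Φ x) {x v : E} (hv : v ∈ subdifferential Φ x) (d : E) :
    ∃ y, φ y x = Φ x ∧ ∃ w ∈ subdifferential (φ y) x, ⟪v, d⟫ ≤ ⟪w, d⟫ := by
  have hray (t : ℝ) (ht : 0 < t) : ∃ y, Φ (x + (0 : ℝ) • d) + t * ⟪v, d⟫ ≤ φ y (x + t • d) := by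
    obtain ⟨y, hy⟩ := hattain (x + t • d)
    refine ⟨y, ?_⟩
    have := hv (x + t • d)
    rw [add_sub_cancel_left, real_inner_smul_right] at this
    rw [zero_smul, add_zero, hy]
    linarith
  obtain ⟨y, hy, hslope⟩ := exists_eq_and_forall_add_mul_le (g := fun y t => φ y (x + t • d))
    (fun y => ((hconv y).comp_add_smul x d).subset (subset_univ _) (convex_Ici 0))
    (fun t => husc _) (fun y t => hle y _) hray
  simp only [zero_smul, add_zero] at hy hslope
  exact ⟨y, hy, (hconv y).exists_mem_subdifferential_le_inner hslope⟩

theorem subdifferential_sup_convex_general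
    {n : ℕ} {Y : Type*} [MetricSpace Y] [CompactSpace Y] [Nonempty Y]
    (φ : Y → EuclideanSpace ℝ (Fin n) → ℝ)
    (hconv : ∀ y, ConvexOn ℝ Set.univ (φ y))
    (husc : ∀ x, UpperSemicontinuous fun y => φ y x)
    (Φ : EuclideanSpace ℝ (Fin n) → ℝ)
    (hΦ : ∀ x, Φ x = ⨆ y, φ y x)
    (x : EuclideanSpace ℝ (Fin n)) :
    {v : EuclideanSpace ℝ (Fin n) | ∀ z, Φ z ≥ Φ x + ⟪v, z - x⟫} =
      closure (convexHull ℝ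
        (⋃ y ∈ {y : Y | φ y x = Φ x},
          {v : EuclideanSpace ℝ (Fin n) | ∀ z, φ y z ≥ φ y x + ⟪v, z - x⟫})) := by
  change subdifferential Φ x =
    closure (convexHull ℝ (⋃ y ∈ {y | φ y x = Φ x}, subdifferential (φ y) x))
  have hle (y : Y) (z) : φ y z ≤ Φ z := hΦ z ▸ le_ciSup (husc z).bddAbove_range y
  have hattain (z) : ∃ y, φ y z = Φ z := hΦ z ▸ (husc z).exists_eq_ciSup
  refine Subset.antisymm (fun v hv => mem_closure_convexHull_of_forall_inner_le fun d => ?_) ?_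
  · obtain ⟨y, hy, w, hw, hvw⟩ :=
      exists_active_le_inner_of_mem_subdifferential hconv husc hle hattain hv d
    exact ⟨w, mem_biUnion hy hw, hvw⟩
  · exact closure_minimal (convexHull_min
      (iUnion₂_subset fun y hy => subdifferential_subset_of_le (hle y) hy)
      (convex_subdifferential Φ x)) (isClosed_subdifferential Φ x)

/-- Theorem on the subdifferential of a supremum of convex functions.
`Y` compact metric space, `φ y ·` convex for each `y`, `φ · x` upper semicontinuous for
each `x`, `Φ x = sup_y φ y x` finite near `x`. Then the subdifferential of `Φ` at `x`
equals the closed convex hull of the union of the subdifferentials `∂(φ y ·)(x)` over the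
active set `Y(x) = {y | φ y x = Φ x}`. -/
theorem subdifferential_sup_convex
    {n : ℕ} {Y : Type*} [MetricSpace Y] [CompactSpace Y] [Nonempty Y]
    (φ : Y → EuclideanSpace ℝ (Fin n) → ℝ)
    (hconv : ∀ y, ConvexOn ℝ Set.univ (φ y))
    (husc : ∀ x, UpperSemicontinuous fun y => φ y x)
    (Φ : EuclideanSpace ℝ (Fin n) → ℝ)
    (hΦ : ∀ x, Φ x = ⨆ y, φ y x)
    (x : EuclideanSpace ℝ (Fin n))
    (hfin : ∀ᶠ z in nhds x, BddAbove (Set.range fun y => φ y z)) :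
    {v : EuclideanSpace ℝ (Fin n) | ∀ z, Φ z ≥ Φ x + ⟪v, z - x⟫} =
      closure (convexHull ℝ
        (⋃ y ∈ {y : Y | φ y x = Φ x},
          {v : EuclideanSpace ℝ (Fin n) | ∀ z, φ y z ≥ φ y x + ⟪v, z - x⟫})) :=
  subdifferential_sup_convex_general φ hconv husc Φ hΦ x
end

section
/- Let F and G be real Hilbert spaces, A : F → G a bounded linear operator, g ∈ G, ε > 0, and J : F → ℝ convex, lower semicontinuous, and coercive (J(f) → ∞ as ‖f‖ → ∞), strictly convex along ker A (for all f ≠ f' with f − f' ∈ ker A, J((f+f')/2) < (J(f)+J(f'))/2). Then for every λ > 0, the Lagrangian L(f,λ) = J(f) + λ(‖A f − g‖² − ε) has a unique minimizer f_λ over F. -/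
/-!
Existence: the Lagrangian is convex, lower semicontinuous and coercive, so its sublevel sets
are closed, convex and bounded. In a Hilbert space a decreasing sequence of such sets has a
common point (the minimal-norm points of the sets form a Cauchy sequence by the parallelogram
law), and a common point of the sublevel sets along a minimizing sequence is a minimizer.

Uniqueness: by the parallelogram law the data term drops strictly at the midpoint of `f` and
`f'` unless `A f = A f'`, in which case `J` drops strictly; either way two distinct minimizers
would have a strictly better midpoint.
-/

open Filter Set Bornology Topology

section InnerProductSpace

variable {E : Type*} [NormedAddCommGroup E] [InnerProductSpace ℝ E]

theorem norm_half_smul_add_sq (u v : E) :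
    ‖(2 : ℝ)⁻¹ • (u + v)‖ ^ 2 = (‖u‖ ^ 2 + ‖v‖ ^ 2) / 2 - ‖u - v‖ ^ 2 / 4 := by
  rw [norm_smul, mul_pow]
  norm_num
  linarith [parallelogram_law_with_norm ℝ u v]

theorem cauchySeq_of_norm_le_norm_half_smul_add {p : ℕ → E} {d : ℝ}
    (hlim : Tendsto (fun n ↦ ‖p n‖) atTop (𝓝 d))
    (hmid : ∀ N m n, N ≤ m → N ≤ n → ‖p N‖ ≤ ‖(2 : ℝ)⁻¹ • (p m + p n)‖) : CauchySeq p := by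
  have hmono : Monotone fun n ↦ ‖p n‖ := fun N n hNn ↦ by
    simpa [← two_smul ℝ (p n), smul_smul] using hmid N n n hNn hNn
  rw [Metric.cauchySeq_iff']
  intro r hr
  obtain ⟨N, hN⟩ := ((hlim.pow 2).eventually (lt_mem_nhds
    (sub_lt_self (d ^ 2) (by positivity : 0 < r ^ 2 / 2)))).exists
  refine ⟨N, fun n hn ↦ ?_⟩
  have hsq : ‖p n - p N‖ ^ 2 < r ^ 2 := by
    have := norm_half_smul_add_sq (p n) (p N)
    nlinarith [hmid N n N hn le_rfl, hmono.ge_of_tendsto hlim n, norm_nonneg (p N),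
      norm_nonneg (p n)]
  rw [dist_eq_norm]
  exact lt_of_pow_lt_pow_left₀ 2 hr.le hsq

theorem Convex.exists_mem_forall_norm_le {K : Set E} (hK : Convex ℝ K) (hc : IsComplete K)
    (hne : K.Nonempty) : ∃ v ∈ K, ∀ w ∈ K, ‖v‖ ≤ ‖w‖ := by
  obtain ⟨v, hv, heq⟩ := exists_norm_eq_iInf_of_complete_convex hne hc hK 0
  refine ⟨v, hv, fun w hw ↦ ?_⟩
  have : ‖(0 : E) - v‖ ≤ ‖(0 : E) - w‖ := heq ▸
    ciInf_le ⟨0, forall_mem_range.2 fun _ ↦ norm_nonneg _⟩ (⟨w, hw⟩ : K)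
  simpa using this

theorem Antitone.nonempty_iInter_of_convex_of_isClosed [CompleteSpace E] {C : ℕ → Set E}
    (hC : Antitone C) (hne : ∀ n, (C n).Nonempty) (hcl : ∀ n, IsClosed (C n))
    (hconv : ∀ n, Convex ℝ (C n)) (hbdd : IsBounded (C 0)) : (⋂ n, C n).Nonempty := by
  choose p hp hmin using fun n ↦ (hconv n).exists_mem_forall_norm_le (hcl n).isComplete (hne n)
  have hpC : ∀ N n, N ≤ n → p n ∈ C N := fun N n h ↦ hC h (hp n)
  have hmid : ∀ N m n, N ≤ m → N ≤ n → ‖p N‖ ≤ ‖(2 : ℝ)⁻¹ • (p m + p n)‖ :=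
    fun N m n hm hn ↦ hmin N _ <| by
      simpa [smul_add] using hconv N (hpC N m hm) (hpC N n hn)
        (by norm_num : (0 : ℝ) ≤ 2⁻¹) (by norm_num) (by norm_num)
  have hmono : Monotone fun n ↦ ‖p n‖ := fun N n h ↦ hmin N _ (hpC N n h)
  obtain ⟨R, hR⟩ := hbdd.exists_norm_le
  have hlim := tendsto_atTop_ciSup hmono
    ⟨R, forall_mem_range.2 fun n ↦ hR _ (hpC 0 n n.zero_le)⟩
  obtain ⟨x, hx⟩ :=
    cauchySeq_tendsto_of_complete (cauchySeq_of_norm_le_norm_half_smul_add hlim hmid)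
  exact ⟨x, mem_iInter.2 fun N ↦ (hcl N).mem_of_tendsto hx <|
    eventually_atTop.2 ⟨N, fun n ↦ hpC N n⟩⟩

theorem Filter.Tendsto.isBounded_sublevel {α : Type*} [Bornology α] {f : α → ℝ}
    (hf : Tendsto f (cobounded α) atTop) (t : ℝ) : Bornology.IsBounded {x | f x ≤ t} := by
  rw [Bornology.isBounded_def]
  exact (hf.eventually_gt_atTop t).mono fun _ ↦ not_le.2

theorem LowerSemicontinuous.exists_forall_le_of_quasiconvexOn [CompleteSpace E] {f : E → ℝ}
    (hlsc : LowerSemicontinuous f) (hqc : QuasiconvexOn ℝ univ f)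
    (hcoer : Tendsto f (cobounded E) atTop) : ∃ x, ∀ y, f x ≤ f y := by
  -- a minimizing sequence of values in `EReal`, so that `f` need not be known to be bounded below
  obtain ⟨u, hanti, hlim, hmem⟩ :=
    exists_seq_tendsto_sInf (range_nonempty fun x ↦ (f x : EReal)) (OrderBot.bddBelow _)
  choose y hy using hmem
  have hC : Antitone fun n ↦ {x | f x ≤ f (y n)} := fun m n h x (hx : f x ≤ f (y n)) ↦
    hx.trans <| EReal.coe_le_coe_iff.1 <| (hy n).trans_le <| (hanti h).trans_eq (hy m).symm
  obtain ⟨x, hx⟩ := hC.nonempty_iInter_of_convex_of_isClosed (fun n ↦ ⟨y n, le_refl (f (y n))⟩)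
    (fun n ↦ hlsc.isClosed_preimage _) (fun n ↦ by simpa using hqc (f (y n)))
    (hcoer.isBounded_sublevel _)
  have hx_le : (f x : EReal) ≤ sInf (range fun x ↦ (f x : EReal)) :=
    ge_of_tendsto' hlim fun n ↦ (hy n).symm ▸ EReal.coe_le_coe (mem_iInter.1 hx n)
  exact ⟨x, fun z ↦ EReal.coe_le_coe_iff.1 <| hx_le.trans <| sInf_le ⟨z, rfl⟩⟩

end InnerProductSpace

theorem convexOn_norm_sub_sq {E G : Type*} [NormedAddCommGroup E] [NormedSpace ℝ E]
    [NormedAddCommGroup G] [NormedSpace ℝ G] (A : E →L[ℝ] G) (g : G) :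
    ConvexOn ℝ univ fun f ↦ ‖A f - g‖ ^ 2 := by
  simpa [Function.comp_def] using
    (convexOn_univ_norm.pow (fun _ _ ↦ norm_nonneg _) 2).comp_affineMap
      ((A : E →ₗ[ℝ] G).toAffineMap - AffineMap.const ℝ E g)

section Lagrangian

variable {F G : Type*} [NormedAddCommGroup F] [InnerProductSpace ℝ F]
  [NormedAddCommGroup G] [InnerProductSpace ℝ G]

def lagrangian (J : F → ℝ) (A : F →L[ℝ] G) (g : G) (ε lam : ℝ) (f : F) : ℝ :=
  J f + lam * (‖A f - g‖ ^ 2 - ε)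

variable {J : F → ℝ} {A : F →L[ℝ] G} {g : G} {ε lam : ℝ}

theorem convexOn_lagrangian (hJ : ConvexOn ℝ univ J) (hlam : 0 ≤ lam) :
    ConvexOn ℝ univ (lagrangian J A g ε lam) := by
  refine (hJ.add (((convexOn_norm_sub_sq A g).smul hlam).add_const (-(lam * ε)))).congr
    fun f _ ↦ ?_
  simp only [lagrangian, Pi.add_apply, smul_eq_mul]
  ring

theorem lowerSemicontinuous_lagrangian (hJ : LowerSemicontinuous J) :
    LowerSemicontinuous (lagrangian J A g ε lam) :=
  hJ.add (by fun_prop : Continuous fun f ↦ lam * (‖A f - g‖ ^ 2 - ε)).lowerSemicontinuous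

theorem tendsto_lagrangian_cobounded (hJ : Tendsto J (cobounded F) atTop) (hlam : 0 ≤ lam) :
    Tendsto (lagrangian J A g ε lam) (cobounded F) atTop :=
  tendsto_atTop_mono (fun f ↦ by simp only [lagrangian]; nlinarith [sq_nonneg ‖A f - g‖])
    (tendsto_atTop_add_const_right _ (-(lam * ε)) hJ)

theorem lagrangian_half_smul_add_lt (hJ : ConvexOn ℝ univ J)
    (hJstrict : ∀ f f' : F, f ≠ f' → A (f - f') = 0 →
      J ((2 : ℝ)⁻¹ • (f + f')) < (J f + J f') / 2)
    (hlam : 0 < lam) {f f' : F} (hne : f ≠ f') :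
    lagrangian J A g ε lam ((2 : ℝ)⁻¹ • (f + f')) <
      (lagrangian J A g ε lam f + lagrangian J A g ε lam f') / 2 := by
  have hq : ‖A ((2 : ℝ)⁻¹ • (f + f')) - g‖ ^ 2 =
      (‖A f - g‖ ^ 2 + ‖A f' - g‖ ^ 2) / 2 - ‖A (f - f')‖ ^ 2 / 4 := by
    have hmid : A ((2 : ℝ)⁻¹ • (f + f')) - g = (2 : ℝ)⁻¹ • ((A f - g) + (A f' - g)) := by
      simp only [map_smul, map_add]
      module
    rw [hmid, norm_half_smul_add_sq, map_sub, sub_sub_sub_cancel_right]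
  simp only [lagrangian, hq]
  by_cases hker : A (f - f') = 0
  · have := hJstrict f f' hne hker
    rw [hker, norm_zero]
    nlinarith
  · have hJmid : J ((2 : ℝ)⁻¹ • (f + f')) ≤ (J f + J f') / 2 := by
      have := hJ.2 (mem_univ f) (mem_univ f') (by norm_num : (0 : ℝ) ≤ 2⁻¹)
        (by norm_num : (0 : ℝ) ≤ 2⁻¹) (by norm_num)
      simp only [smul_eq_mul, ← smul_add] at this
      linarith
    have := mul_pos hlam (pow_pos (norm_pos_iff.2 hker) 2)
    nlinarith

end Lagrangian

theorem lagrangian_has_unique_minimizer_general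
    {F G : Type*} [NormedAddCommGroup F] [InnerProductSpace ℝ F] [CompleteSpace F]
    [NormedAddCommGroup G] [InnerProductSpace ℝ G]
    (A : F →L[ℝ] G) (g : G) (ε : ℝ) (J : F → ℝ)
    (hJconv : ConvexOn ℝ Set.univ J)
    (hJlsc : LowerSemicontinuous J)
    (hJcoer : Filter.Tendsto J (Filter.comap (fun f : F => ‖f‖) Filter.atTop) Filter.atTop)
    (hJstrict : ∀ f f' : F, f ≠ f' → A (f - f') = 0 →
      J ((2 : ℝ)⁻¹ • (f + f')) < (J f + J f') / 2)
    (lam : ℝ) (hlam : 0 < lam) :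
    ∃! flam : F, ∀ f : F,
      J flam + lam * (‖A flam - g‖ ^ 2 - ε) ≤ J f + lam * (‖A f - g‖ ^ 2 - ε) := by
  set L := lagrangian J A g ε lam
  rw [comap_norm_atTop] at hJcoer
  have hconv : ConvexOn ℝ univ L := convexOn_lagrangian hJconv hlam.le
  obtain ⟨flam, hmin⟩ := (lowerSemicontinuous_lagrangian hJlsc).exists_forall_le_of_quasiconvexOn
    hconv.quasiconvexOn (tendsto_lagrangian_cobounded hJcoer hlam.le)
  refine ⟨flam, hmin, fun f (hf : ∀ f', L f ≤ L f') ↦ by_contra fun hne ↦ ?_⟩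
  have hmid : L ((2 : ℝ)⁻¹ • (f + flam)) < (L f + L flam) / 2 :=
    lagrangian_half_smul_add_lt hJconv hJstrict hlam hne
  linarith [hmin f, hf flam, hf ((2 : ℝ)⁻¹ • (f + flam))]

/-- Under Assumption 1 (`J` proper convex, lower semicontinuous and
coercive) and strict convexity of `J` along `ker A`, for every `λ > 0` the Lagrangian
`L(f, λ) = J f + λ (‖A f − g‖² − ε)` has a unique minimizer `f_λ` over `F`. -/
theorem lagrangian_has_unique_minimizer
    {F G : Type*} [NormedAddCommGroup F] [InnerProductSpace ℝ F] [CompleteSpace F]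
    [NormedAddCommGroup G] [InnerProductSpace ℝ G] [CompleteSpace G]
    (A : F →L[ℝ] G) (g : G) (ε : ℝ) (hε : 0 < ε) (J : F → ℝ)
    (hJconv : ConvexOn ℝ Set.univ J)
    (hJlsc : LowerSemicontinuous J)
    (hJcoer : Filter.Tendsto J (Filter.comap (fun f : F => ‖f‖) Filter.atTop) Filter.atTop)
    (hJstrict : ∀ f f' : F, f ≠ f' → A (f - f') = 0 →
      J ((2 : ℝ)⁻¹ • (f + f')) < (J f + J f') / 2)
    (lam : ℝ) (hlam : 0 < lam) :
    ∃! flam : F, ∀ f : F,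
      J flam + lam * (‖A flam - g‖ ^ 2 - ε) ≤ J f + lam * (‖A f - g‖ ^ 2 - ε) :=
  lagrangian_has_unique_minimizer_general A g ε J hJconv hJlsc hJcoer hJstrict lam hlam
end

section
/- Let F and G be real Hilbert spaces, A : F → G a bounded linear operator, g ∈ G, ε > 0, and J : F → ℝ convex, lower semicontinuous, and coercive, strictly convex along ker A. For λ > 0 let f_λ denote the unique minimizer over F of L(f,λ) = J(f) + λ(‖A f − g‖² − ε), and let D(λ) = inf_{f ∈ F} L(f,λ). Then D is differentiable at every λ > 0, with derivative D'(λ) = ‖A f_λ − g‖² − ε. -/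
/-!
With `c f = ‖A f - g‖² - ε`, testing the minimizers `f_λ` and `f_μ` in each other's Lagrangians
squeezes `D μ - D λ` between `(μ - λ) c(f_μ)` and `(μ - λ) c(f_λ)`, so `D'(λ) = c(f_λ)` as soon
as `μ ↦ c(f_μ)` is continuous at `λ`. That continuity comes from the quadratic penalty: by the
parallelogram law `L(·, λ)` is `λ`-strongly convex along `A`, so
`L(f, λ) ≥ L(f_λ, λ) + (λ/2)‖A (f - f_λ)‖²`, and taking `f = f_μ` gives
`‖A f_μ - A f_λ‖ = O(|μ - λ|)`.
-/

open Filter Topology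

theorem hasDerivAt_of_mul_le_sub_le_mul {D h : ℝ → ℝ} {x : ℝ} (hh : ContinuousAt h x)
    (hlow : ∀ᶠ y in 𝓝 x, (y - x) * h y ≤ D y - D x)
    (hup : ∀ᶠ y in 𝓝 x, D y - D x ≤ (y - x) * h x) :
    HasDerivAt D (h x) x := by
  rw [hasDerivAt_iff_isLittleO, Asymptotics.isLittleO_iff]
  intro c hc
  have hclose : ∀ᶠ y in 𝓝 x, |h y - h x| ≤ c :=
    (Metric.tendsto_nhds.1 hh c hc).mono fun y hy => hy.le
  filter_upwards [hlow, hup, hclose] with y hl hu hy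
  rw [Real.norm_eq_abs, Real.norm_eq_abs, smul_eq_mul]
  calc |D y - D x - (y - x) * h x| ≤ |(y - x) * (h y - h x)| := by
        rw [abs_le]
        constructor <;> linarith [neg_abs_le ((y - x) * (h y - h x)),
          abs_nonneg ((y - x) * (h y - h x))]
    _ ≤ c * |y - x| := by
        rw [abs_mul, mul_comm]
        exact mul_le_mul_of_nonneg_right hy (abs_nonneg _)

section QuadraticPenalty

variable {F G : Type*} [AddCommGroup F] [Module ℝ F] [NormedAddCommGroup G]
  [InnerProductSpace ℝ G] {J : F → ℝ} (A : F →ₗ[ℝ] G) (g : G) (ε : ℝ)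

theorem ConvexOn.add_half_mul_norm_map_sub_sq_le (hJ : ConvexOn ℝ Set.univ J) {μ : ℝ}
    {f₀ : F} (hmin : ∀ f, J f₀ + μ * (‖A f₀ - g‖ ^ 2 - ε) ≤ J f + μ * (‖A f - g‖ ^ 2 - ε))
    (f : F) :
    J f₀ + μ * (‖A f₀ - g‖ ^ 2 - ε) + μ / 2 * ‖A (f - f₀)‖ ^ 2
      ≤ J f + μ * (‖A f - g‖ ^ 2 - ε) := by
  set m : F := (2⁻¹ : ℝ) • f + (2⁻¹ : ℝ) • f₀
  have hJm : J m ≤ 2⁻¹ * J f + 2⁻¹ * J f₀ :=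
    hJ.2 trivial trivial (by norm_num) (by norm_num) (by norm_num)
  have hAm : A m - g = (2⁻¹ : ℝ) • ((A f - g) + (A f₀ - g)) := by
    simp only [m, map_add, map_smul]
    module
  have hsub : (A f - g) - (A f₀ - g) = A (f - f₀) := by
    rw [map_sub]; abel
  have hpar := parallelogram_law_with_norm ℝ (A f - g) (A f₀ - g)
  rw [hsub] at hpar
  have hnorm : ‖A m - g‖ ^ 2 = (‖A f - g‖ ^ 2 + ‖A f₀ - g‖ ^ 2) / 2 - ‖A (f - f₀)‖ ^ 2 / 4 := by
    rw [hAm, norm_smul, mul_pow, norm_inv, Real.norm_two]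
    linarith
  have hm := hmin m
  rw [hnorm] at hm
  linarith

theorem mul_norm_map_minimizer_sub_le (hJ : ConvexOn ℝ Set.univ J) {lam μ : ℝ} {a b : F}
    (hμ : |μ - lam| ≤ lam / 4)
    (ha : ∀ f, J a + lam * (‖A a - g‖ ^ 2 - ε) ≤ J f + lam * (‖A f - g‖ ^ 2 - ε))
    (hb : ∀ f, J b + μ * (‖A b - g‖ ^ 2 - ε) ≤ J f + μ * (‖A f - g‖ ^ 2 - ε)) :
    lam * ‖A (b - a)‖ ≤ 8 * ‖A a - g‖ * |μ - lam| := by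
  set d := A (b - a)
  set r := A a - g
  have hres : A b - g = d + r := by
    simp only [d, r, map_sub]; abel
  have hgrowth := hJ.add_half_mul_norm_map_sub_sq_le A g ε ha b
  have hb' := hb a
  rw [hres, norm_add_sq_real] at hgrowth hb'
  have hinner : (lam - μ) * inner ℝ d r ≤ |μ - lam| * (‖d‖ * ‖r‖) := by
    calc (lam - μ) * inner ℝ d r ≤ |(lam - μ) * inner ℝ d r| := le_abs_self _
      _ = |μ - lam| * |inner ℝ d r| := by rw [abs_mul, abs_sub_comm]
      _ ≤ |μ - lam| * (‖d‖ * ‖r‖) :=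
          mul_le_mul_of_nonneg_left (abs_real_inner_le_norm d r) (abs_nonneg _)
  have hquad : (lam - μ) * ‖d‖ ^ 2 ≤ lam / 4 * ‖d‖ ^ 2 :=
    mul_le_mul_of_nonneg_right (by linarith [neg_abs_le (μ - lam)]) (sq_nonneg _)
  -- `(λ/2)‖d‖² ≤ (λ - μ)(‖d‖² + 2⟪d, r⟫)`, and the window `|μ - λ| ≤ λ/4` absorbs the `‖d‖²` term.
  have hsq : lam / 4 * ‖d‖ ^ 2 ≤ 2 * |μ - lam| * ‖r‖ * ‖d‖ := by nlinarith
  rcases (norm_nonneg d).eq_or_lt with hd | hd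
  · rw [← hd, mul_zero]
    positivity
  · nlinarith

theorem continuousAt_map_minimizer (hJ : ConvexOn ℝ Set.univ J) {x : ℝ → F} {lam : ℝ}
    (hlam : 0 < lam)
    (hx : ∀ᶠ μ in 𝓝 lam, ∀ f,
      J (x μ) + μ * (‖A (x μ) - g‖ ^ 2 - ε) ≤ J f + μ * (‖A f - g‖ ^ 2 - ε)) :
    ContinuousAt (fun μ => A (x μ)) lam := by
  have hnear : ∀ᶠ μ in 𝓝 lam, |μ - lam| ≤ lam / 4 := by
    filter_upwards [Metric.closedBall_mem_nhds lam (by positivity : 0 < lam / 4)] with μ hμ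
    rwa [Metric.mem_closedBall, Real.dist_eq] at hμ
  have hbound : Tendsto (fun μ => 8 * ‖A (x lam) - g‖ * |μ - lam| / lam) (𝓝 lam) (𝓝 0) := by
    have : Continuous fun μ => 8 * ‖A (x lam) - g‖ * |μ - lam| / lam := by fun_prop
    simpa using this.tendsto lam
  rw [ContinuousAt, tendsto_iff_norm_sub_tendsto_zero]
  refine squeeze_zero' (Eventually.of_forall fun _ => norm_nonneg _) ?_ hbound
  filter_upwards [hx, hnear] with μ hμ hμlam
  rw [← map_sub, le_div_iff₀ hlam, mul_comm]
  exact mul_norm_map_minimizer_sub_le A g ε hJ hμlam hx.self_of_nhds hμ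

end QuadraticPenalty

theorem dual_function_differentiable_general
    {F G : Type*} [NormedAddCommGroup F] [InnerProductSpace ℝ F]
    [NormedAddCommGroup G] [InnerProductSpace ℝ G]
    (A : F →L[ℝ] G) (g : G) (ε : ℝ) (J : F → ℝ)
    (hJconv : ConvexOn ℝ Set.univ J)
    (fl : ℝ → F)
    (hfl : ∀ μ : ℝ, 0 < μ → ∀ f : F,
      J (fl μ) + μ * (‖A (fl μ) - g‖ ^ 2 - ε) ≤ J f + μ * (‖A f - g‖ ^ 2 - ε))
    (D : ℝ → ℝ)
    (hD : ∀ μ : ℝ, D μ = ⨅ f : F, (J f + μ * (‖A f - g‖ ^ 2 - ε))) :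
    ∀ lam : ℝ, 0 < lam → HasDerivAt D (‖A (fl lam) - g‖ ^ 2 - ε) lam := by
  intro lam hlam
  have hDval : ∀ μ, 0 < μ → D μ = J (fl μ) + μ * (‖A (fl μ) - g‖ ^ 2 - ε) := fun μ hμ =>
    (hD μ).trans <| le_antisymm (ciInf_le ⟨_, Set.forall_mem_range.2 (hfl μ hμ)⟩ _)
      (le_ciInf (hfl μ hμ))
  have hpos : ∀ᶠ μ in 𝓝 lam, 0 < μ := lt_mem_nhds hlam
  have hres : ContinuousAt (fun μ => A (fl μ)) lam :=
    continuousAt_map_minimizer (A : F →ₗ[ℝ] G) g ε hJconv hlam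
      (hpos.mono fun μ hμ => hfl μ hμ)
  refine hasDerivAt_of_mul_le_sub_le_mul (((hres.sub_const g).norm.pow 2).sub_const ε) ?_ ?_
  · filter_upwards [hpos] with μ hμ
    rw [hDval μ hμ, hDval lam hlam]
    linarith [hfl lam hlam (fl μ)]
  · filter_upwards [hpos] with μ hμ
    rw [hDval μ hμ, hDval lam hlam]
    linarith [hfl μ hμ (fl lam)]

/-- Proposition: differentiability of the dual function.
Under Assumption 1 (`J` convex, lsc, coercive) and strict convexity along `ker A`, for
each `λ > 0` the Lagrangian `L(·, λ)` has a unique minimizer `f_λ`; the dual function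
`D(λ) = inf_f L(f, λ)` is then differentiable at every `λ > 0` with
`D'(λ) = ‖A f_λ − g‖² − ε`. -/
theorem dual_function_differentiable
    {F G : Type*} [NormedAddCommGroup F] [InnerProductSpace ℝ F] [CompleteSpace F]
    [NormedAddCommGroup G] [InnerProductSpace ℝ G] [CompleteSpace G]
    (A : F →L[ℝ] G) (g : G) (ε : ℝ) (hε : 0 < ε) (J : F → ℝ)
    (hJconv : ConvexOn ℝ Set.univ J)
    (hJlsc : LowerSemicontinuous J)
    (hJcoer : Filter.Tendsto J (Filter.comap (fun f : F => ‖f‖) Filter.atTop) Filter.atTop)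
    (hJstrict : ∀ f f' : F, f ≠ f' → A (f - f') = 0 →
      J ((2 : ℝ)⁻¹ • (f + f')) < (J f + J f') / 2)
    (fl : ℝ → F)
    (hfl : ∀ μ : ℝ, 0 < μ → ∀ f : F,
      J (fl μ) + μ * (‖A (fl μ) - g‖ ^ 2 - ε) ≤ J f + μ * (‖A f - g‖ ^ 2 - ε))
    (D : ℝ → ℝ)
    (hD : ∀ μ : ℝ, D μ = ⨅ f : F, (J f + μ * (‖A f - g‖ ^ 2 - ε))) :
    ∀ lam : ℝ, 0 < lam → HasDerivAt D (‖A (fl lam) - g‖ ^ 2 - ε) lam :=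
  dual_function_differentiable_general A g ε J hJconv fl hfl D hD
end

section
/- Let F and G be real Hilbert spaces, A : F → G a bounded linear operator with adjoint A*, g ∈ G, ε > 0, J : F → ℝ convex, and λ̄, λ̄' > 0. Let f̄ minimize L(·, λ̄) and f̄' minimize L(·, λ̄'), where L(f,λ) = J(f) + λ(‖A f − g‖² − ε), and suppose J(f̄) = J(f̄'). Then, from the two subgradient inequalities J(f̄') ≥ J(f̄) − ⟨2λ̄ A*(A f̄ − g), f̄' − f̄⟩ and J(f̄) ≥ J(f̄') − ⟨2λ̄' A*(A f̄' − g), f̄ − f̄'⟩, one obtains ‖A(f̄ − f̄')‖² ≤ 0, i.e. A f̄ = A f̄', so f̄ − f̄' ∈ ker A. -/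
/-!
Average the two minimizers. Since `J` is convex and `J f̄ = J f̄'`, the midpoint `m` costs no more
regularization than `f̄`, while by the parallelogram law its residual satisfies
`‖A m - g‖² = (‖A f̄ - g‖² + ‖A f̄' - g‖²)/2 - ‖A (f̄ - f̄')‖²/4`. Minimality of `f̄'` gives
`‖A f̄' - g‖ ≤ ‖A f̄ - g‖`, so comparing `f̄` with `m` leaves `λ̄ ‖A (f̄ - f̄')‖²/4 ≤ 0`.
-/

theorem norm_midpoint_smul_sq {E : Type*} [NormedAddCommGroup E] [InnerProductSpace ℝ E]
    (u v : E) :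
    ‖(1 / 2 : ℝ) • (u + v)‖ ^ 2 = (‖u‖ ^ 2 + ‖v‖ ^ 2) / 2 - ‖u - v‖ ^ 2 / 4 := by
  have hpar := parallelogram_law_with_norm ℝ u v
  rw [norm_smul, mul_pow]
  norm_num
  linarith

theorem map_eq_of_forall_le_of_convexOn {F G : Type*} [NormedAddCommGroup F]
    [InnerProductSpace ℝ F] [NormedAddCommGroup G] [InnerProductSpace ℝ G]
    (A : F →L[ℝ] G) (g : G) {s : Set F} {J : F → ℝ} (hJ : ConvexOn ℝ s J)
    {lam : ℝ} (hlam : 0 < lam) {f f' : F} (hf : f ∈ s) (hf' : f' ∈ s)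
    (hmin : ∀ h ∈ s, J f + lam * ‖A f - g‖ ^ 2 ≤ J h + lam * ‖A h - g‖ ^ 2)
    (hJ' : J f' ≤ J f) (hres : ‖A f' - g‖ ≤ ‖A f - g‖) :
    A f = A f' := by
  set m := (1 / 2 : ℝ) • f + (1 / 2 : ℝ) • f'
  have hhalf : (0 : ℝ) ≤ 1 / 2 := by norm_num
  have hm_mem : m ∈ s := hJ.1 hf hf' hhalf hhalf (by norm_num)
  have hJm : J m ≤ J f := by
    have := hJ.2 hf hf' hhalf hhalf (by norm_num)
    rw [smul_eq_mul, smul_eq_mul] at this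
    linarith
  have hres_m : A m - g = (1 / 2 : ℝ) • ((A f - g) + (A f' - g)) := by
    simp only [m, map_add, map_smul]
    module
  have hdiff : (A f - g) - (A f' - g) = A (f - f') := by
    rw [map_sub]; abel
  have hres_sq : ‖A f' - g‖ ^ 2 ≤ ‖A f - g‖ ^ 2 := by gcongr
  have hm := hmin m hm_mem
  rw [hres_m, norm_midpoint_smul_sq, hdiff] at hm
  have hzero : ‖A (f - f')‖ ^ 2 ≤ 0 := by nlinarith
  rw [← sub_eq_zero, ← map_sub, ← norm_eq_zero]
  exact pow_eq_zero_iff two_ne_zero |>.mp (le_antisymm hzero (sq_nonneg _))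

theorem lagrangian_minimizers_differ_in_kernel_general
    {F G : Type*} [NormedAddCommGroup F] [InnerProductSpace ℝ F]
    [NormedAddCommGroup G] [InnerProductSpace ℝ G]
    (A : F →L[ℝ] G) (g : G) (ε : ℝ) (J : F → ℝ)
    (hJconv : ConvexOn ℝ Set.univ J)
    (lam lam' : ℝ) (hlam : 0 < lam) (hlam' : 0 < lam')
    (fbar fbar' : F)
    (hfbar : ∀ f : F,
      J fbar + lam * (‖A fbar - g‖ ^ 2 - ε) ≤ J f + lam * (‖A f - g‖ ^ 2 - ε))
    (hfbar' : ∀ f : F,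
      J fbar' + lam' * (‖A fbar' - g‖ ^ 2 - ε) ≤ J f + lam' * (‖A f - g‖ ^ 2 - ε))
    (hJeq : J fbar = J fbar') :
    ‖A (fbar - fbar')‖ ^ 2 ≤ 0 ∧ A fbar = A fbar' ∧ A (fbar - fbar') = 0 := by
  have hmin : ∀ h ∈ Set.univ,
      J fbar + lam * ‖A fbar - g‖ ^ 2 ≤ J h + lam * ‖A h - g‖ ^ 2 := fun h _ => by
    linarith [hfbar h]
  have hres : ‖A fbar' - g‖ ≤ ‖A fbar - g‖ := by
    have := hfbar' fbar
    rw [hJeq, add_le_add_iff_left, mul_le_mul_iff_right₀ hlam', sub_le_sub_iff_right] at this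
    exact pow_le_pow_iff_left₀ (norm_nonneg _) (norm_nonneg _) two_ne_zero |>.mp this
  have hAeq : A fbar = A fbar' :=
    map_eq_of_forall_le_of_convexOn A g hJconv hlam (Set.mem_univ _) (Set.mem_univ _) hmin
      hJeq.ge hres
  have hker : A (fbar - fbar') = 0 := by rw [map_sub, hAeq, sub_self]
  exact ⟨by simp [hker], hAeq, hker⟩

/-- key step in the uniqueness proof of Theorem `estimation-lambda`.
For convex `J` and `λ̄, λ̄' > 0`, let `f̄` minimize `L(·, λ̄)` and `f̄'` minimize
`L(·, λ̄')`, and suppose `J f̄ = J f̄'`. Then, from the two subgradient inequalities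
`J f̄' ≥ J f̄ − ⟪2λ̄ A*(A f̄ − g), f̄' − f̄⟫` and
`J f̄ ≥ J f̄' − ⟪2λ̄' A*(A f̄' − g), f̄ − f̄'⟫`, one obtains `‖A(f̄ − f̄')‖² ≤ 0`, i.e.
`A f̄ = A f̄'`, so `f̄ − f̄' ∈ ker A`. -/
theorem lagrangian_minimizers_differ_in_kernel
    {F G : Type*} [NormedAddCommGroup F] [InnerProductSpace ℝ F] [CompleteSpace F]
    [NormedAddCommGroup G] [InnerProductSpace ℝ G] [CompleteSpace G]
    (A : F →L[ℝ] G) (g : G) (ε : ℝ) (hε : 0 < ε) (J : F → ℝ)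
    (hJconv : ConvexOn ℝ Set.univ J)
    (lam lam' : ℝ) (hlam : 0 < lam) (hlam' : 0 < lam')
    (fbar fbar' : F)
    (hfbar : ∀ f : F,
      J fbar + lam * (‖A fbar - g‖ ^ 2 - ε) ≤ J f + lam * (‖A f - g‖ ^ 2 - ε))
    (hfbar' : ∀ f : F,
      J fbar' + lam' * (‖A fbar' - g‖ ^ 2 - ε) ≤ J f + lam' * (‖A f - g‖ ^ 2 - ε))
    (hJeq : J fbar = J fbar') :
    ‖A (fbar - fbar')‖ ^ 2 ≤ 0 ∧ A fbar = A fbar' ∧ A (fbar - fbar') = 0 :=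
  lagrangian_minimizers_differ_in_kernel_general A g ε J hJconv lam lam' hlam hlam' fbar fbar' hfbar
    hfbar' hJeq
end
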